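/- For every integer k ≥ 2 and every integer m ≥ 0, q^k · Σ_{j=0}^{m} C(m,j) q^j E_{j,q}^{(k,k)} + E_{m,q}^{(k,k)} = (1+q) · E_{m,q}^{(k−1,k−1)}. -/

import Mathlib

/-!
At `x = 0` the binomial identity `∑_j C(m,j) C(j,n) q^j (1-q)^(m-j) = C(m,n) q^n` collapses the
double sum on the left to a single sum over `n`, whose `n`-th term carries the factor
`q^(k+n) + 1`. This cancels the `i = 0` factor `1 + q^(k+n)` of the order-`k` denominator and
leaves exactly the order-`(k-1)` denominator with `h = k - 1`.
-/

open Finset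

/-- The q-number `[x]_q = (1 - q^x)/(1 - q)`, with `q^x = exp (x * log q)` (rpow). -/
noncomputable def qNum (q x : ℝ) : ℝ := (1 - q ^ x) / (1 - q)

/-- `[l]_{-q} = (1 - (-q)^l)/(1 + q)` for a natural number `l`. -/
noncomputable def qNumNeg (q : ℝ) (l : ℕ) : ℝ := (1 - (-q) ^ l) / (1 + q)

/-- The higher-order q-Euler polynomial
`E_{m,q}^{(h,k)}(x) = ((1+q)^k/(1-q)^m) * Σ_{j=0}^m C(m,j) (-1)^j q^{jx} / Π_{i=0}^{k-1} (1 + q^{h+j-i})`. -/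
noncomputable def qE (q : ℝ) (h : ℤ) (k m : ℕ) (x : ℝ) : ℝ :=
  ((1 + q) ^ k / (1 - q) ^ m) *
    ∑ j ∈ Finset.range (m + 1),
      (m.choose j : ℝ) * (-1) ^ j * q ^ ((j : ℝ) * x) /
        ∏ i ∈ Finset.range k, (1 + q ^ ((h : ℝ) + (j : ℝ) - (i : ℝ)))

section Binomial

variable {R : Type*} [CommSemiring R]

theorem sum_range_choose_mul_choose_mul_pow (x y : R) (m n : ℕ) :
    ∑ j ∈ range (m + 1), (m.choose j : R) * j.choose n * x ^ j * y ^ (m - j)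
      = m.choose n * x ^ n * (x + y) ^ (m - n) := by
  rcases lt_or_ge m n with hmn | hnm
  · refine (sum_eq_zero fun j hj => ?_).trans (by simp [Nat.choose_eq_zero_of_lt hmn])
    have hjn : j < n := by rw [mem_range] at hj; omega
    simp [Nat.choose_eq_zero_of_lt hjn]
  obtain ⟨r, rfl⟩ := Nat.exists_eq_add_of_le hnm
  have hlow : ∀ j ∈ range n, (((n + r).choose j : R) * j.choose n * x ^ j * y ^ (n + r - j)) = 0 :=
    fun j hj => by simp [Nat.choose_eq_zero_of_lt (mem_range.1 hj)]
  rw [add_assoc, sum_range_add, sum_eq_zero hlow, zero_add, Nat.add_sub_cancel_left,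
    add_pow, mul_sum]
  refine sum_congr rfl fun t _ => ?_
  have hchoose : (n + r).choose (n + t) * (n + t).choose n = (n + r).choose n * r.choose t := by
    rw [Nat.choose_mul (Nat.le_add_right n t)]; simp
  rw [show n + r - (n + t) = r - t by omega, pow_add, ← Nat.cast_mul, hchoose]
  push_cast
  ring

theorem sum_range_choose_mul_pow_mul_sum_choose (x y : R) (a : ℕ → R) (m : ℕ) :
    ∑ j ∈ range (m + 1), (m.choose j : R) * x ^ j * y ^ (m - j) *
        ∑ n ∈ range (j + 1), (j.choose n : R) * a n
      = ∑ n ∈ range (m + 1), (m.choose n : R) * x ^ n * (x + y) ^ (m - n) * a n := by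
  have hextend : ∀ j ∈ range (m + 1), ∑ n ∈ range (j + 1), (j.choose n : R) * a n
      = ∑ n ∈ range (m + 1), (j.choose n : R) * a n := by
    intro j hj
    refine sum_subset (range_subset_range.2 (by rw [mem_range] at hj; omega)) fun n _ hn => ?_
    simp [Nat.choose_eq_zero_of_lt (by rw [mem_range] at hn; omega : j < n)]
  rw [sum_congr rfl fun j hj => by rw [hextend j hj, mul_sum], sum_comm]
  refine sum_congr rfl fun n _ => ?_
  rw [← sum_range_choose_mul_choose_mul_pow, sum_mul]
  exact sum_congr rfl fun j _ => by ring

end Binomial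

noncomputable def qEDenom (q : ℝ) (h : ℤ) (k j : ℕ) : ℝ :=
  ∏ i ∈ range k, (1 + q ^ ((h : ℝ) + (j : ℝ) - (i : ℝ)))

theorem qEDenom_pos {q : ℝ} (hq : 0 < q) (h : ℤ) (k j : ℕ) : 0 < qEDenom q h k j :=
  prod_pos fun _ _ => by positivity

theorem qEDenom_succ (q : ℝ) (h : ℤ) (k j : ℕ) :
    qEDenom q h (k + 1) j = qEDenom q (h - 1) k j * (1 + q ^ ((h : ℝ) + j)) := by
  rw [qEDenom, prod_range_succ', qEDenom]
  congr 1
  · exact prod_congr rfl fun i _ => by push_cast; ring_nf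
  · simp

theorem qE_zero (q : ℝ) (h : ℤ) (k m : ℕ) :
    qE q h k m 0 = (1 + q) ^ k / (1 - q) ^ m *
      ∑ j ∈ range (m + 1), (m.choose j : ℝ) * (-1) ^ j / qEDenom q h k j := by
  simp [qE, qEDenom]

theorem sum_range_choose_mul_pow_mul_qE_zero {q : ℝ} (hq1 : q ≠ 1) (h : ℤ) (k m : ℕ) :
    ∑ j ∈ range (m + 1), (m.choose j : ℝ) * q ^ j * qE q h k j 0
      = (1 + q) ^ k / (1 - q) ^ m *
        ∑ n ∈ range (m + 1), (m.choose n : ℝ) * q ^ n * ((-1) ^ n / qEDenom q h k n) := by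
  have h1q : 1 - q ≠ 0 := sub_ne_zero.2 hq1.symm
  have hterm : ∀ j ∈ range (m + 1), (m.choose j : ℝ) * q ^ j * qE q h k j 0
      = (1 + q) ^ k / (1 - q) ^ m * ((m.choose j : ℝ) * q ^ j * (1 - q) ^ (m - j) *
          ∑ n ∈ range (j + 1), (j.choose n : ℝ) * ((-1) ^ n / qEDenom q h k n)) := by
    intro j hj
    have hpow : (1 - q) ^ m = (1 - q) ^ j * (1 - q) ^ (m - j) := by
      rw [← pow_add, Nat.add_sub_cancel' (by rw [mem_range] at hj; omega)]
    simp only [qE_zero, mul_div_assoc]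
    rw [hpow]
    field_simp
  rw [sum_congr rfl hterm, ← mul_sum, sum_range_choose_mul_pow_mul_sum_choose]
  simp

theorem stmt_16 (q : ℝ) (hq : 0 < q) (hq1 : q ≠ 1) (k : ℕ) (hk : 2 ≤ k) (m : ℕ) :
    q ^ k * (∑ j ∈ Finset.range (m + 1), (m.choose j : ℝ) * q ^ j * qE q k k j 0) +
        qE q k k m 0
      = (1 + q) * qE q ((k : ℤ) - 1) (k - 1) m 0 := by
  obtain ⟨K, rfl⟩ : ∃ K, k = K + 1 := ⟨k - 1, by omega⟩
  rw [sum_range_choose_mul_pow_mul_qE_zero hq1, qE_zero, qE_zero, Nat.add_sub_cancel, mul_sum,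
    mul_sum, mul_sum, mul_sum, mul_sum, ← sum_add_distrib]
  refine sum_congr rfl fun n _ => ?_
  have hpow : q ^ (K + 1) * q ^ n = q ^ (((K + 1 : ℕ) : ℤ) + (n : ℝ)) := by
    rw [← pow_add, ← Real.rpow_natCast]; push_cast; ring_nf
  have hD := qEDenom_pos hq (K : ℤ) K n
  rw [qEDenom_succ, ← hpow]
  field_simp
  ring
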